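/- arXiv:1504.01299 — 4 statements merged into one kernel-verified Lean document; each statement's English description precedes it below -/
import Mathlib

section
/- Let α: ℂ[[x₁,…,x_{r+l+1}]] → ℂ[[y₁,…,y_n]] be a ℂ-algebra homomorphism of formal power series rings with n > s + l, and suppose z := α(x_{r+l+1}) lies in the maximal ideal. Suppose there exists a nonzero G = Σ_{i≥0} a_i(x₁,…,x_{r+l}) x_{r+l+1}^i with α(G) = 0, α(a_i) ∈ ℂ[[y₁,…,y_{s+l}]] for all i, and α(a_i) ≠ 0 whenever a_i ≠ 0. If z ∉ ℂ[[y₁,…,y_{s+l}]], then a contradiction arises; i.e., z ∈ ℂ[[y₁,…,y_{s+l}]]. -/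
/-!
Give the variables `y_j` with `j ≥ s + l` weight one and the others weight zero, and write
`z = b + v` with `b` the weight-zero part of `z`. Taylor expansion gives
`0 = f(b + v) = ∑ₖ f^[k](b) vᵏ`, where the Hasse derivatives `f^[k](b)` have weight zero.
If `v ≠ 0` has weighted order `m ≥ 1` and leading part `vₘ`, and the `f^[j](b)` with `j < k`
are already known to vanish, the weight-`k m` part of this sum is `f^[k](b) vₘᵏ`; as the power
series ring is a domain, every `f^[k](b)` vanishes. Since `b` has no constant term, the
coefficients of `f` are recovered from the `f^[k](b)` degree by degree, so `f = 0`.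
-/

open Finset

theorem sum_range_mul_add_pow {S : Type*} [CommSemiring S] (e : ℕ → S) (b v : S) (N : ℕ) :
    ∑ i ∈ range N, e i * (b + v) ^ i =
      ∑ k ∈ range N, (∑ j ∈ range (N - k), ((k + j).choose k : S) * e (k + j) * b ^ j) * v ^ k := by
  have h := sum_Ico_Ico_comm 0 N fun k i => ((i.choose k : ℕ) : S) * e i * b ^ (i - k) * v ^ k
  simp only [← range_eq_Ico, sum_Ico_eq_sum_range, Nat.add_sub_cancel_left] at h
  simp only [sum_mul]
  rw [h]
  refine sum_congr rfl fun i _ => ?_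
  rw [add_comm b, add_pow, mul_sum]
  exact sum_congr rfl fun k _ => by ring

theorem Finsupp.weight_ne_zero_iff {σ : Type*} (w : σ → ℕ) (d : σ →₀ ℕ) :
    weight w d ≠ 0 ↔ ∃ j, w j ≠ 0 ∧ d j ≠ 0 := by
  simp only [ne_eq, weight_apply, Finsupp.sum, smul_eq_mul, sum_eq_zero_iff, mem_support_iff,
    mul_eq_zero, not_forall, not_or]
  exact ⟨fun ⟨j, _, h⟩ => ⟨j, h.2, h.1⟩, fun ⟨j, hw, hd⟩ => ⟨j, hd, hd, hw⟩⟩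

namespace MvPowerSeries

variable {σ R : Type*} [CommRing R]

theorem le_order_sum {ι : Type*} {s : Finset ι} {f : ι → MvPowerSeries σ R} {n : ℕ∞}
    (h : ∀ i ∈ s, n ≤ (f i).order) : n ≤ (∑ i ∈ s, f i).order :=
  Finset.sum_induction f (fun g => n ≤ g.order)
    (fun _ _ ha hb => (le_min ha hb).trans min_order_le_add) (by simp) h

theorem le_order_sub {f g : MvPowerSeries σ R} {n : ℕ∞} (hf : n ≤ f.order) (hg : n ≤ g.order) :
    n ≤ (f - g).order := by
  rw [sub_eq_add_neg]
  exact (le_min hf (by rwa [order_neg])).trans min_order_le_add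

theorem eq_zero_of_forall_le_order {f : MvPowerSeries σ R} (h : ∀ N : ℕ, (N : ℕ∞) ≤ f.order) :
    f = 0 :=
  order_eq_top_iff.1 (top_le_iff.1 (ENat.forall_natCast_le_iff_le.1 fun N _ => h N))

theorem eq_of_forall_le_order_sub {f g : MvPowerSeries σ R}
    (h : ∀ N : ℕ, (N : ℕ∞) ≤ (f - g).order) : f = g :=
  sub_eq_zero.1 (eq_zero_of_forall_le_order h)

theorem le_order_mul_pow (x : MvPowerSeries σ R) {y : MvPowerSeries σ R}
    (hy : constantCoeff y = 0) (i : ℕ) : (i : ℕ∞) ≤ (x * y ^ i).order :=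
  (le_order_pow_of_constantCoeff_eq_zero i hy).trans (le_add_self.trans le_order_mul)

/-- The sum `∑ i, x i` computed coefficientwise, keeping at degree `d` only the terms with
`i ≤ degree d`: it is the limit of the partial sums when `i ≤ order (x i)` for all `i`. -/
noncomputable def adicSum (x : ℕ → MvPowerSeries σ R) : MvPowerSeries σ R :=
  fun d => ∑ i ∈ range (Finsupp.degree d + 1), coeff d (x i)

theorem coeff_adicSum (x : ℕ → MvPowerSeries σ R) (d : σ →₀ ℕ) :
    coeff d (adicSum x) = ∑ i ∈ range (Finsupp.degree d + 1), coeff d (x i) :=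
  rfl

theorem le_order_adicSum_sub_sum_range {x : ℕ → MvPowerSeries σ R}
    (hx : ∀ i : ℕ, (i : ℕ∞) ≤ (x i).order) (N : ℕ) :
    (N : ℕ∞) ≤ (adicSum x - ∑ i ∈ range N, x i).order := by
  refine le_order fun d hd => ?_
  rw [map_sub, map_sum, coeff_adicSum, sub_eq_zero]
  refine sum_subset (range_subset_range.2 (by exact_mod_cast hd)) fun i _ hi => ?_
  exact coeff_of_lt_order ((Nat.cast_lt.2 (by simpa using hi)).trans_le (hx i))

theorem adicSum_eq_of_forall_ne_eq_zero {x : ℕ → MvPowerSeries σ R}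
    (hx : ∀ i : ℕ, (i : ℕ∞) ≤ (x i).order) {k : ℕ} (h : ∀ i ≠ k, x i = 0) : adicSum x = x k := by
  ext d
  rw [coeff_adicSum]
  by_cases hk : k ≤ Finsupp.degree d
  · exact sum_eq_single_of_mem k (mem_range.2 (Nat.lt_succ_of_le hk)) fun i _ hi => by
      rw [h i hi, map_zero]
  · rw [coeff_of_lt_order ((Nat.cast_lt.2 (not_le.1 hk)).trans_le (hx k))]
    exact sum_eq_zero fun i hi => by
      rw [h i (by rintro rfl; exact hk (Nat.lt_succ_iff.1 (mem_range.1 hi))), map_zero]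

theorem weightedHomogeneousComponent_adicSum (w : σ → ℕ) (p : ℕ) (x : ℕ → MvPowerSeries σ R) :
    weightedHomogeneousComponent w p (adicSum x) =
      adicSum fun i => weightedHomogeneousComponent w p (x i) := by
  ext d
  simp only [coeff_weightedHomogeneousComponent, coeff_adicSum]
  split_ifs <;> simp

theorem le_order_weightedHomogeneousComponent (w : σ → ℕ) (p : ℕ) (f : MvPowerSeries σ R) :
    f.order ≤ (weightedHomogeneousComponent w p f).order :=
  le_order fun d hd => by
    rw [coeff_weightedHomogeneousComponent]
    split_ifs
    · exact coeff_of_lt_order hd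
    · rfl

/-- The value at `b` of the `k`-th Hasse derivative of `f(t) = ∑ e i * t ^ i`, so that
`f(b + t) = ∑ taylorCoeff e b k * t ^ k`. -/
noncomputable def taylorCoeff (e : ℕ → MvPowerSeries σ R) (b : MvPowerSeries σ R) (k : ℕ) :
    MvPowerSeries σ R :=
  adicSum fun j => ((k + j).choose k : MvPowerSeries σ R) * e (k + j) * b ^ j

theorem adicSum_mul_add_pow (e : ℕ → MvPowerSeries σ R) {b v : MvPowerSeries σ R}
    (hb : constantCoeff b = 0) (hv : constantCoeff v = 0) :
    adicSum (fun i => e i * (b + v) ^ i) = adicSum fun k => taylorCoeff e b k * v ^ k := by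
  refine eq_of_forall_le_order_sub fun N => ?_
  have hsplit : adicSum (fun i => e i * (b + v) ^ i) - adicSum (fun k => taylorCoeff e b k * v ^ k)
      = (adicSum (fun i => e i * (b + v) ^ i) - ∑ i ∈ range N, e i * (b + v) ^ i)
        - (adicSum (fun k => taylorCoeff e b k * v ^ k) - ∑ k ∈ range N, taylorCoeff e b k * v ^ k)
        - ∑ k ∈ range N, (taylorCoeff e b k -
            ∑ j ∈ range (N - k), ((k + j).choose k : MvPowerSeries σ R) * e (k + j) * b ^ j) *
              v ^ k := by
    rw [sum_range_mul_add_pow]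
    simp only [sub_mul, sum_sub_distrib]
    abel
  have hbv : constantCoeff (b + v) = 0 := by rw [map_add, hb, hv, add_zero]
  rw [hsplit]
  refine le_order_sub (le_order_sub
    (le_order_adicSum_sub_sum_range (fun i => le_order_mul_pow (e i) hbv i) N)
    (le_order_adicSum_sub_sum_range (fun k => le_order_mul_pow (taylorCoeff e b k) hv k) N))
    (le_order_sum fun k hk => ?_)
  have hk : k ≤ N := (mem_range.1 hk).le
  calc (N : ℕ∞) = (N - k : ℕ) + k := by rw [← Nat.cast_add, Nat.sub_add_cancel hk]
    _ ≤ (taylorCoeff e b k - _).order + (v ^ k).order :=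
      add_le_add (le_order_adicSum_sub_sum_range (fun j => le_order_mul_pow _ hb j) _)
        (le_order_pow_of_constantCoeff_eq_zero k hv)
    _ ≤ _ := le_order_mul

theorem eq_zero_of_taylorCoeff_eq_zero {e : ℕ → MvPowerSeries σ R} {b : MvPowerSeries σ R}
    (hb : constantCoeff b = 0) (h : ∀ k, taylorCoeff e b k = 0) (i : ℕ) : e i = 0 := by
  suffices ∀ D : ℕ, ∀ i, (D : ℕ∞) ≤ (e i).order from eq_zero_of_forall_le_order fun D => this D i
  intro D
  induction D with
  | zero => simp
  | succ D ih =>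
    intro k
    have hk := le_order_adicSum_sub_sum_range (fun j => le_order_mul_pow
      (((k + j).choose k : MvPowerSeries σ R) * e (k + j)) hb j) (D + 1)
    rw [← taylorCoeff, h k, zero_sub, order_neg, sum_range_succ'] at hk
    simp only [add_zero, Nat.choose_self, Nat.cast_one, one_mul, pow_zero, mul_one] at hk
    have hrest : ((D + 1 : ℕ) : ℕ∞) ≤ (∑ j ∈ range D,
        ((k + (j + 1)).choose k : MvPowerSeries σ R) * e (k + (j + 1)) * b ^ (j + 1)).order := by
      refine le_order_sum fun j _ => ?_
      calc ((D + 1 : ℕ) : ℕ∞) ≤ D + (j + 1 : ℕ) := by push_cast; gcongr; simp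
        _ ≤ (((k + (j + 1)).choose k : MvPowerSeries σ R) * e (k + (j + 1))).order
            + (b ^ (j + 1)).order :=
          add_le_add ((ih _).trans (le_add_self.trans le_order_mul))
            (le_order_pow_of_constantCoeff_eq_zero _ hb)
        _ ≤ _ := le_order_mul
    simpa using le_order_sub hk hrest

section weight

variable (w : σ → ℕ)

theorem isWeightedHomogeneous_one : IsWeightedHomogeneous w (1 : MvPowerSeries σ R) 0 := by
  classical
  intro d hd
  rw [coeff_one] at hd
  split_ifs at hd with h
  · rw [h, map_zero]
  · exact absurd rfl hd

/-- The power series in the variables of weight `0`. -/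
def weightZeroSubring : Subring (MvPowerSeries σ R) where
  carrier := {f | weightedHomogeneousComponent w 0 f = f}
  mul_mem' {a b} (ha : weightedHomogeneousComponent w 0 a = a)
      (hb : weightedHomogeneousComponent w 0 b = b) := by
    change weightedHomogeneousComponent w (0 + 0) (a * b) = a * b
    rw [weightedHomogeneousComponent_mul_of_le_weightedOrder (by simp) (by simp), ha, hb]
  one_mem' := (isWeightedHomogeneous_iff_eq_weightedHomogeneousComponent.1
    (isWeightedHomogeneous_one w)).symm
  add_mem' {a b} (ha : weightedHomogeneousComponent w 0 a = a)
      (hb : weightedHomogeneousComponent w 0 b = b) := by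
    change weightedHomogeneousComponent w 0 (a + b) = a + b
    rw [map_add, ha, hb]
  zero_mem' := map_zero _
  neg_mem' {a} (ha : weightedHomogeneousComponent w 0 a = a) := by
    change weightedHomogeneousComponent w 0 (-a) = -a
    rw [map_neg, ha]

theorem mem_weightZeroSubring_iff {f : MvPowerSeries σ R} :
    f ∈ weightZeroSubring w ↔ IsWeightedHomogeneous w f 0 :=
  eq_comm.trans isWeightedHomogeneous_iff_eq_weightedHomogeneousComponent.symm

variable {w}

theorem taylorCoeff_mem {e : ℕ → MvPowerSeries σ R} {b : MvPowerSeries σ R}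
    (he : ∀ i, e i ∈ weightZeroSubring w) (hb : b ∈ weightZeroSubring w) (k : ℕ) :
    taylorCoeff e b k ∈ weightZeroSubring w := by
  change weightedHomogeneousComponent w 0 (adicSum _) = adicSum _
  rw [weightedHomogeneousComponent_adicSum]
  congr 1
  funext j
  exact mul_mem (mul_mem (natCast_mem _ _) (he _)) (pow_mem hb j)

theorem le_weightedOrder_pow_of_le {f : MvPowerSeries σ R} {m : ℕ}
    (hm : (m : ℕ∞) ≤ f.weightedOrder w) (k : ℕ) : ((k * m : ℕ) : ℕ∞) ≤ (f ^ k).weightedOrder w := by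
  rw [Nat.cast_mul, ← nsmul_eq_mul]
  exact (nsmul_le_nsmul_right hm k).trans (le_weightedOrder_pow w k)

theorem weightedHomogeneousComponent_pow {f : MvPowerSeries σ R} {m : ℕ}
    (hm : (m : ℕ∞) ≤ f.weightedOrder w) (k : ℕ) :
    weightedHomogeneousComponent w (k * m) (f ^ k) = weightedHomogeneousComponent w m f ^ k := by
  induction k with
  | zero =>
    rw [zero_mul, pow_zero, pow_zero]
    exact one_mem (weightZeroSubring (R := R) w)
  | succ k ih =>
    rw [add_one_mul, pow_succ, pow_succ,
      weightedHomogeneousComponent_mul_of_le_weightedOrder (le_weightedOrder_pow_of_le hm k) hm, ih]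

theorem eq_zero_of_adicSum_mul_pow_eq_zero [NoZeroDivisors R] {g : ℕ → MvPowerSeries σ R}
    (hg : ∀ k, g k ∈ weightZeroSubring w) {v : MvPowerSeries σ R}
    (hv : 1 ≤ v.weightedOrder w) (hv0 : v ≠ 0) (h : adicSum (fun k => g k * v ^ k) = 0) (k : ℕ) :
    g k = 0 := by
  have hvc : constantCoeff v = 0 := by
    rw [← coeff_zero_eq_constantCoeff_apply]
    exact coeff_eq_zero_of_lt_weightedOrder w (by rw [map_zero]; exact Order.one_le_iff_pos.1 hv)
  obtain ⟨m, hm⟩ := ENat.ne_top_iff_exists.1 ((weightedOrder_eq_top_iff w).not.2 hv0)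
  have hm1 : 1 ≤ m := by exact_mod_cast hm ▸ hv
  induction k using Nat.strong_induction_on with
  | _ k ih =>
    set y := fun j => weightedHomogeneousComponent w (k * m) (g j * v ^ j)
    have hy : ∀ j ≠ k, y j = 0 := by
      intro j hj
      rcases hj.lt_or_gt with hjk | hkj
      · simp only [y, ih j hjk, zero_mul, map_zero]
      · refine weightedHomogeneousComponent_of_lt_weightedOrder_eq_zero ?_
        calc ((k * m : ℕ) : ℕ∞) < (j * m : ℕ) := by
              exact_mod_cast Nat.mul_lt_mul_of_pos_right hkj hm1
          _ = j • v.weightedOrder w := by rw [← hm, Nat.cast_mul, nsmul_eq_mul]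
          _ ≤ (v ^ j).weightedOrder w := le_weightedOrder_pow w j
          _ ≤ (g j).weightedOrder w + (v ^ j).weightedOrder w := le_add_self
          _ ≤ _ := le_weightedOrder_mul w
    have hyk : y k = g k * weightedHomogeneousComponent w m v ^ k := by
      simp only [y]
      rw [← zero_add (k * m), weightedHomogeneousComponent_mul_of_le_weightedOrder (by simp)
          (le_weightedOrder_pow_of_le hm.le k), weightedHomogeneousComponent_pow hm.le, hg k]
    have hsum : adicSum y = y k := adicSum_eq_of_forall_ne_eq_zero
      (fun j => (le_order_mul_pow (g j) hvc j).trans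
        (le_order_weightedHomogeneousComponent _ _ _)) hy
    rw [← weightedHomogeneousComponent_adicSum, h, map_zero, hyk] at hsum
    exact (mul_eq_zero.1 hsum.symm).resolve_right
      (pow_ne_zero k (weightedHomogeneousComponent_of_weightedOrder hm))

theorem mem_weightZeroSubring_of_adicSum_eq_zero [NoZeroDivisors R] {e : ℕ → MvPowerSeries σ R}
    (he : ∀ i, e i ∈ weightZeroSubring w) (hne : ∃ i, e i ≠ 0) {z : MvPowerSeries σ R}
    (hz : constantCoeff z = 0) (hroot : adicSum (fun i => e i * z ^ i) = 0) :
    z ∈ weightZeroSubring w := by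
  set b := weightedHomogeneousComponent w 0 z with hbz
  have hb : b ∈ weightZeroSubring w :=
    (mem_weightZeroSubring_iff w).2 (isWeightedHomogeneous_weightedHomogeneousComponent w z 0)
  have hb0 : constantCoeff b = 0 := by
    rw [← coeff_zero_eq_constantCoeff_apply, hbz, coeff_weightedHomogeneousComponent, map_zero,
      if_pos rfl, coeff_zero_eq_constantCoeff_apply, hz]
  by_contra hzA
  have hv0 : z - b ≠ 0 := fun h => hzA (sub_eq_zero.1 h ▸ hb)
  have hv : 1 ≤ (z - b).weightedOrder w := nat_le_weightedOrder w fun d hd => by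
    rw [map_sub, hbz, coeff_weightedHomogeneousComponent, if_pos (Nat.lt_one_iff.1 hd), sub_self]
  have hvc : constantCoeff (z - b) = 0 := by rw [map_sub, hz, hb0, sub_zero]
  have htaylor : adicSum (fun k => taylorCoeff e b k * (z - b) ^ k) = 0 := by
    rw [← adicSum_mul_add_pow e hb0 hvc, add_sub_cancel, hroot]
  obtain ⟨i, hi⟩ := hne
  exact hi (eq_zero_of_taylorCoeff_eq_zero hb0
    (eq_zero_of_adicSum_mul_pow_eq_zero (taylorCoeff_mem he hb) hv hv0 htaylor) i)

end weight

end MvPowerSeries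

theorem root_lies_in_subring_general (n s l : ℕ)
    (e : ℕ → MvPowerSeries (Fin n) ℂ)
    (he : ∀ i, ∀ d : Fin n →₀ ℕ, (∃ j : Fin n, s + l ≤ (j : ℕ) ∧ d j ≠ 0) →
      MvPowerSeries.coeff d (e i) = 0)
    (hne : ∃ i, e i ≠ 0)
    (z : MvPowerSeries (Fin n) ℂ)
    (hz : MvPowerSeries.constantCoeff z = 0)
    (hsum : ∀ d : Fin n →₀ ℕ,
      ∑ i ∈ Finset.range ((d.sum fun _ k => k) + 1),
        MvPowerSeries.coeff d (e i * z ^ i) = 0) :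
    ∀ d : Fin n →₀ ℕ, (∃ j : Fin n, s + l ≤ (j : ℕ) ∧ d j ≠ 0) →
      MvPowerSeries.coeff d z = 0 := by
  set w : Fin n → ℕ := fun j => if s + l ≤ (j : ℕ) then 1 else 0
  have hw (d : Fin n →₀ ℕ) : Finsupp.weight w d ≠ 0 ↔ ∃ j : Fin n, s + l ≤ (j : ℕ) ∧ d j ≠ 0 := by
    simp [Finsupp.weight_ne_zero_iff, w]
  have heA (i : ℕ) : e i ∈ MvPowerSeries.weightZeroSubring w :=
    (MvPowerSeries.mem_weightZeroSubring_iff w).2 fun {d} hd =>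
      not_not.1 fun hwd => hd (he i d ((hw d).1 hwd))
  have hroot : MvPowerSeries.adicSum (fun i => e i * z ^ i) = 0 := by
    ext d
    exact hsum d
  have hzA := MvPowerSeries.mem_weightZeroSubring_of_adicSum_eq_zero heA hne hz hroot
  exact fun d hd =>
    MvPowerSeries.IsWeightedHomogeneous.coeff_eq_zero
      ((MvPowerSeries.mem_weightZeroSubring_iff w).1 hzA) ((hw d).2 hd)

/-- Suppose `n > s + l`, and let `e i ∈ ℂ[[y₁,…,y_n]]` (the images `α(a_i)`) all lie in the
subring `ℂ[[y₁,…,y_{s+l}]]` (i.e. their coefficients vanish on any exponent involving a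
variable of index `≥ s + l`), not all zero, so that `f(t) = Σ e_i t^i` is a nonzero series.
Let `z` (namely `α(x_{r+l+1})`) lie in the maximal ideal, and suppose `f(z) = Σ e_i z^i = 0`
(each coefficient of the sum vanishes; the sum is coefficientwise finite since `z` has
positive order).  Then `z ∈ ℂ[[y₁,…,y_{s+l}]]`. -/
theorem root_lies_in_subring (n s l : ℕ) (hn : s + l < n)
    (e : ℕ → MvPowerSeries (Fin n) ℂ)
    (he : ∀ i, ∀ d : Fin n →₀ ℕ, (∃ j : Fin n, s + l ≤ (j : ℕ) ∧ d j ≠ 0) →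
      MvPowerSeries.coeff d (e i) = 0)
    (hne : ∃ i, e i ≠ 0)
    (z : MvPowerSeries (Fin n) ℂ)
    (hz : MvPowerSeries.constantCoeff z = 0)
    (hsum : ∀ d : Fin n →₀ ℕ,
      ∑ i ∈ Finset.range ((d.sum fun _ k => k) + 1),
        MvPowerSeries.coeff d (e i * z ^ i) = 0) :
    ∀ d : Fin n →₀ ℕ, (∃ j : Fin n, s + l ≤ (j : ℕ) ∧ d j ≠ 0) →
      MvPowerSeries.coeff d z = 0 :=
  root_lies_in_subring_general n s l e he hne z hz hsum
end

section
/- Let H = {v ∈ ℤ^r : v·C_i ≥ 0 for 1 ≤ i ≤ s} where C₁,…,C_s ∈ ℤ^r. Then H is a finitely generated commutative monoid (Gordan's Lemma). -/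
/-!
Split `v = v⁺ - v⁻` and add slack coordinates `t = Φ v`: then `{v | 0 ≤ Φ v}` is the image,
under `(v⁺, v⁻, t) ↦ v⁺ - v⁻`, of the kernel in `ℕ^(r + r + s)` of
`(v⁺, v⁻, t) ↦ Φ (v⁺ - v⁻) - t`. That kernel is closed under subtracting a smaller element of
itself, so it is generated by its minimal nonzero elements, which form an antichain and hence
are finitely many by Dickson's lemma.
-/

open AddSubmonoid Finset

theorem AddSubmonoid.fg_of_tsub_mem {ι : Type*} [Finite ι] (P : AddSubmonoid (ι → ℕ))
    (hP : ∀ a ∈ P, ∀ b ∈ P, b ≤ a → a - b ∈ P) : P.FG := by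
  set W := {a | Minimal (fun x => x ∈ P ∧ x ≠ 0) a}
  have hW : W.Finite := (setOfPred_minimal_antichain _).finite_of_partiallyWellOrderedOn
    (Set.isPWO_of_wellQuasiOrderedLE W)
  refine (fg_iff P).2 ⟨W, le_antisymm (closure_le.2 fun _ ha => ha.1.1) fun a ha => ?_, hW⟩
  induction a using WellFoundedLT.induction with
  | _ a ih =>
  by_cases ha0 : a = 0
  · exact ha0 ▸ zero_mem _
  by_cases haW : a ∈ W
  · exact subset_closure haW
  obtain ⟨b, hbP, hb0, hba, hab⟩ : ∃ b ∈ P, b ≠ 0 ∧ b ≤ a ∧ ¬a ≤ b := by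
    simpa [W, Minimal, ha, ha0] using haW
  have hsub : a - b < a := tsub_le_self.lt_of_ne fun h => hb0 <| by
    simpa [h] using add_tsub_cancel_of_le hba
  rw [← add_tsub_cancel_of_le hba]
  exact add_mem (ih b (hba.lt_of_not_ge hab) hbP) (ih _ hsub (hP a ha b hbP hba))

theorem AddMonoidHom.mker_fg {ι M : Type*} [Finite ι] [AddMonoid M] (L : (ι → ℕ) →+ M) :
    (mker L).FG :=
  fg_of_tsub_mem _ fun a ha b hb hba => by
    rw [mem_mker] at ha hb ⊢
    rw [← zero_add (L (a - b)), ← hb, ← map_add, add_tsub_cancel_of_le hba, ha, hb]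

theorem AddSubmonoid.fg_comap_nonneg {κ σ : Type*} [Finite κ] [Finite σ]
    (Φ : (κ → ℤ) →+ (σ → ℤ)) : ((nonneg (σ → ℤ)).comap Φ).FG := by
  let P : (κ ⊕ κ ⊕ σ → ℕ) →+ (κ → ℤ) := AddMonoidHom.mk'
    (fun x j => (x (.inl j) : ℤ) - x (.inr (.inl j))) fun x y => by ext; simp; ring
  let T : (κ ⊕ κ ⊕ σ → ℕ) →+ (σ → ℤ) := AddMonoidHom.mk'
    (fun x i => (x (.inr (.inr i)) : ℤ)) fun x y => by ext; simp
  suffices (AddMonoidHom.mker (Φ.comp P - T)).map P = (nonneg (σ → ℤ)).comap Φ from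
    this ▸ (AddMonoidHom.mker_fg _).map P
  ext v
  simp only [mem_map, AddMonoidHom.mem_mker, mem_comap, mem_nonneg]
  constructor
  · rintro ⟨x, hx, rfl⟩
    rw [AddMonoidHom.sub_apply, sub_eq_zero, AddMonoidHom.comp_apply] at hx
    exact hx ▸ fun i => Int.natCast_nonneg _
  · intro hv
    let x : κ ⊕ κ ⊕ σ → ℕ :=
      Sum.elim (fun j => (v j).toNat) (Sum.elim (fun j => (-v j).toNat) fun i => (Φ v i).toNat)
    have hPx : P x = v := by
      ext j
      simp [P, x]
    refine ⟨x, ?_, hPx⟩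
    ext i
    simp [hPx, T, x, show 0 ≤ Φ v i from hv i]

/-- **Gordan's Lemma.** Let `H = {v ∈ ℤ^r : v·Cᵢ ≥ 0 for 1 ≤ i ≤ s}` for integer vectors
`C₁,…,C_s`.  Then `H` is a finitely generated commutative monoid. -/
theorem gordan_lemma (r s : ℕ) (C : Fin s → Fin r → ℤ) :
    ∃ W : Finset (Fin r → ℤ),
      (∀ w ∈ W, ∀ i, 0 ≤ ∑ j, w j * C i j) ∧
      ∀ v : Fin r → ℤ, (∀ i, 0 ≤ ∑ j, v j * C i j) →
        v ∈ AddSubmonoid.closure (W : Set (Fin r → ℤ)) := by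
  let Φ : (Fin r → ℤ) →+ (Fin s → ℤ) := AddMonoidHom.mk' (fun v i => ∑ j, v j * C i j)
    fun v w => by ext; simp [add_mul, sum_add_distrib]
  obtain ⟨W, hW⟩ := fg_comap_nonneg Φ
  refine ⟨W, fun w hw => ?_, fun v hv => hW ▸ hv⟩
  exact (hW ▸ subset_closure hw : w ∈ (nonneg _).comap Φ)
end

section
/- Let I be a submonoid of ℚ^r and H a finitely generated submonoid of I with n̄·x ∈ H for all x ∈ I, where n̄ is a fixed positive integer. If w₁,…,w_ℓ generate I as a monoid, then the finite set {a₁w₁ + ⋯ + a_ℓ w_ℓ : a_i ∈ ℕ, 0 ≤ a_i ≤ n̄ for all i} generates I as a module over H (every element of I is the sum of an element of this set and an element of H). -/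
/-!
Write `v = ∑ cⱼ wⱼ` and divide each coefficient by `n̄`: `cⱼ = n̄ qⱼ + (cⱼ mod n̄)`.
The quotient parts `qⱼ • (n̄ • wⱼ)` lie in `H`, and the remainders are at most `n̄`.
-/

theorem AddSubmonoid.exists_mem_sum_nsmul_eq_sum_mod_nsmul_add {M ι : Type*} [AddCommMonoid M]
    [Fintype ι] (H : AddSubmonoid M) (n : ℕ) (w : ι → M) (hw : ∀ i, n • w i ∈ H)
    (c : ι → ℕ) : ∃ h ∈ H, ∑ i, c i • w i = ∑ i, (c i % n) • w i + h := by
  refine ⟨∑ i, (c i / n) • n • w i, H.sum_mem fun i _ ↦ H.nsmul_mem (hw i) _, ?_⟩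
  rw [← Finset.sum_add_distrib]
  refine Finset.sum_congr rfl fun i _ ↦ ?_
  rw [smul_smul, ← add_smul, Nat.mod_add_div']

theorem module_generation_over_submonoid_general (r ℓ nbar : ℕ) (hnbar : 0 < nbar)
    (I H : AddSubmonoid (Fin r → ℚ))
    (hmul : ∀ x ∈ I, nbar • x ∈ H)
    (w : Fin ℓ → (Fin r → ℚ)) (hw : ∀ j, w j ∈ I)
    (hgen : ∀ v ∈ I, v ∈ AddSubmonoid.closure (Set.range w)) :
    ∀ v ∈ I, ∃ a : Fin ℓ → ℕ, (∀ j, a j ≤ nbar) ∧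
      ∃ h ∈ H, v = (∑ j, a j • w j) + h := by
  intro v hv
  obtain ⟨c, rfl⟩ := AddSubmonoid.exists_of_mem_closure_range w v (hgen v hv)
  obtain ⟨h, hH, hsum⟩ :=
    H.exists_mem_sum_nsmul_eq_sum_mod_nsmul_add nbar w (fun j ↦ hmul _ (hw j)) c
  exact ⟨fun j ↦ c j % nbar, fun j ↦ (Nat.mod_lt _ hnbar).le, h, hH, hsum⟩

/-- Let `I` be a submonoid of `ℚ^r` generated by `w₁,…,w_ℓ`, and `H ≤ I` a finitely
generated submonoid such that `n̄·x ∈ H` for all `x ∈ I`, where `n̄ > 0`.  Then the finite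
set `{a₁w₁ + ⋯ + a_ℓ w_ℓ : 0 ≤ aᵢ ≤ n̄}` generates `I` as a module over `H`: every element
of `I` is the sum of such an element and an element of `H`. -/
theorem module_generation_over_submonoid (r ℓ nbar : ℕ) (hnbar : 0 < nbar)
    (I H : AddSubmonoid (Fin r → ℚ)) (hHI : H ≤ I) (hHfg : H.FG)
    (hmul : ∀ x ∈ I, nbar • x ∈ H)
    (w : Fin ℓ → (Fin r → ℚ)) (hw : ∀ j, w j ∈ I)
    (hgen : ∀ v ∈ I, v ∈ AddSubmonoid.closure (Set.range w)) :
    ∀ v ∈ I, ∃ a : Fin ℓ → ℕ, (∀ j, a j ≤ nbar) ∧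
      ∃ h ∈ H, v = (∑ j, a j • w j) + h :=
  module_generation_over_submonoid_general r ℓ nbar hnbar I H hmul w hw hgen
end

section
/- Let φ: Y → X be a holomorphic map between connected complex manifolds with dim X = n, and suppose the set Z = {q ∈ Y : rank(dφ_q) < n} is a proper closed subset of Y (i.e., φ has generic rank n). Let Y_ℝ ⊆ Y be a totally real connected real-analytic submanifold of Y of real dimension equal to dim_ℂ Y such that Y is a complexification of Y_ℝ. Then Z ∩ Y_ℝ is nowhere dense in Y_ℝ; in particular the restriction of φ to Y_ℝ has a point where its differential has rank n. -/
/-!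
At a point `q₀ ∈ U \ Z` the differential `dφ q₀` is onto and has a linear right inverse `V`, so
`F x = det (dφ x ∘ V)` satisfies `F q₀ = 1`, and `F x ≠ 0` forces `x ∉ Z`. If `F` vanished at the
real points of a small ball around a real point, it would vanish on the whole complex ball (for
`x = a + i b` with `a, b` real, the line `z ↦ a + z b` is real for real `z`), hence on the connected
set `U`, contradicting `F q₀ = 1`.

The identity theorem only needs `F` to be holomorphic along complex lines, which avoids
Hartogs' theorem: the entries of `dφ` are locally uniform limits of the holomorphic difference
quotients `t⁻¹ • (φ (x + t • v) - φ x)`. The convergence is locally uniform because `dφ` is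
continuous, and that follows from Weierstrass' theorem on the derivatives of the uniformly
convergent family `ζ ↦ φ (x + ζ • v)`.
-/

open Set Metric Filter Topology

theorem Convex.setOf_add_smul_mem {E : Type*} [NormedAddCommGroup E] [NormedSpace ℂ E] {U : Set E}
    (hU : Convex ℝ U) (p w : E) : Convex ℝ {z : ℂ | p + z • w ∈ U} := by
  intro x hx y hy a b ha hb hab
  have hab' : (a : ℂ) + b = 1 := by exact_mod_cast hab
  show p + (a • x + b • y) • w ∈ U
  convert hU hx hy ha hb hab using 1
  simp only [← Complex.coe_smul]
  linear_combination (norm := module) hab'.symm • p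

theorem eventually_norm_smul_lt {𝕜 E : Type*} [NontriviallyNormedField 𝕜] [NormedAddCommGroup E]
    [NormedSpace 𝕜 E] (v : E) {δ : ℝ} (hδ : 0 < δ) : ∀ᶠ t : 𝕜 in 𝓝 0, ‖t • v‖ < δ := by
  have hc : Tendsto (fun t : 𝕜 => t • v) (𝓝 0) (𝓝 0) :=
    (continuous_id.smul continuous_const).tendsto' 0 0 (zero_smul _ _)
  simpa using hc.eventually (ball_mem_nhds 0 hδ)

section LineDifferentiableOn

variable {𝕜 E F : Type*} [NontriviallyNormedField 𝕜] [NormedAddCommGroup E] [NormedSpace 𝕜 E]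
  [NormedAddCommGroup F] [NormedSpace 𝕜 F]

variable (𝕜) in
def LineDifferentiableOn (f : E → F) (s : Set E) : Prop :=
  ∀ x ∈ s, ∀ v, LineDifferentiableAt 𝕜 f x v

theorem LineDifferentiableOn.mono {f : E → F} {s t : Set E} (hf : LineDifferentiableOn 𝕜 f t)
    (hst : s ⊆ t) : LineDifferentiableOn 𝕜 f s :=
  fun x hx => hf x (hst hx)

theorem LineDifferentiableOn.differentiableOn_line {f : E → F} {s : Set E}
    (hf : LineDifferentiableOn 𝕜 f s) (p w : E) :
    DifferentiableOn 𝕜 (fun z : 𝕜 => f (p + z • w)) {z | p + z • w ∈ s} := by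
  intro z hz
  have hcomp : DifferentiableAt 𝕜 ((fun t => f (p + z • w + t • w)) ∘ fun ζ => ζ - z) z :=
    DifferentiableAt.comp z (by rw [sub_self]; exact hf _ hz w) (differentiableAt_id.sub_const z)
  refine hcomp.differentiableWithinAt.congr (fun ζ _ => ?_) ?_ <;>
    simp only [Function.comp_apply, ← add_smul, add_sub_cancel, add_assoc]

theorem LineDifferentiableOn.matrix_det {ι : Type*} [Fintype ι] [DecidableEq ι]
    {M : E → Matrix ι ι 𝕜} {s : Set E} (hM : ∀ i j, LineDifferentiableOn 𝕜 (fun x => M x i j) s) :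
    LineDifferentiableOn 𝕜 (fun x => (M x).det) s := by
  intro x hx v
  simp only [LineDifferentiableAt, Matrix.det_apply']
  exact DifferentiableAt.fun_sum fun σ _ =>
    (DifferentiableAt.fun_finsetProd fun i _ => hM (σ i) i x hx v).const_mul _

end LineDifferentiableOn

theorem tendstoLocallyUniformlyOn_slope_fderiv {𝕜 E G : Type*} [RCLike 𝕜] [NormedAddCommGroup E]
    [NormedSpace 𝕜 E] [NormedAddCommGroup G] [NormedSpace 𝕜 G] {f : E → G} {U : Set E}
    (hU : IsOpen U) (hf : DifferentiableOn 𝕜 f U) (hf' : ContinuousOn (fderiv 𝕜 f) U) (v : E) :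
    TendstoLocallyUniformlyOn (fun (t : 𝕜) x => t⁻¹ • (f (x + t • v) - f x))
      (fun x => fderiv 𝕜 f x v) (𝓝[≠] 0) U := by
  let : NormedSpace ℝ E := .restrictScalars ℝ 𝕜 E
  rw [Metric.tendstoLocallyUniformlyOn_iff]
  intro ε hε x₀ hx₀
  set c := ε / (2 * (‖v‖ + 1))
  have hc : 0 < c := by positivity
  obtain ⟨δ, hδ, hδU⟩ := Metric.mem_nhds_iff.1
    (inter_mem (hU.mem_nhds hx₀) ((hf'.continuousAt (hU.mem_nhds hx₀)).preimage_mem_nhds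
      (ball_mem_nhds _ hc)))
  have hbound : ∀ y ∈ ball x₀ δ, ∀ z ∈ ball x₀ δ, ‖fderiv 𝕜 f z - fderiv 𝕜 f y‖ ≤ 2 * c := by
    intro y hy z hz
    rw [← dist_eq_norm]
    linarith [dist_triangle_right (fderiv 𝕜 f z) (fderiv 𝕜 f y) (fderiv 𝕜 f x₀),
      mem_ball.1 (hδU hy).2, mem_ball.1 (hδU hz).2]
  refine ⟨ball x₀ (δ / 2), mem_nhdsWithin_of_mem_nhds (ball_mem_nhds _ (half_pos hδ)), ?_⟩
  filter_upwards [self_mem_nhdsWithin, eventually_nhdsWithin_of_eventually_nhds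
    (eventually_norm_smul_lt v (half_pos hδ))] with t (ht0 : t ≠ 0) htv y hy
  have hyδ : y ∈ ball x₀ δ := ball_subset_ball (half_le_self hδ.le) hy
  have hytδ : y + t • v ∈ ball x₀ δ := by
    rw [mem_ball] at hy ⊢
    calc dist (y + t • v) x₀ ≤ dist (y + t • v) y + dist y x₀ := dist_triangle _ _ _
      _ < δ / 2 + δ / 2 := by rw [dist_eq_norm, add_sub_cancel_left]; gcongr
      _ = δ := add_halves δ
  have hmv := (convex_ball x₀ δ).norm_image_sub_le_of_norm_fderiv_le'
    (fun z hz => hf.differentiableAt (hU.mem_nhds (hδU hz).1)) (hbound y hyδ) hyδ hytδ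
  rw [add_sub_cancel_left] at hmv
  have hslope : fderiv 𝕜 f y v - t⁻¹ • (f (y + t • v) - f y)
      = -(t⁻¹ • (f (y + t • v) - f y - fderiv 𝕜 f y (t • v))) := by
    rw [map_smul, smul_sub _ _ (t • _), inv_smul_smul₀ ht0]; abel
  rw [dist_eq_norm, hslope, norm_neg, norm_smul, norm_inv]
  calc ‖t‖⁻¹ * ‖f (y + t • v) - f y - fderiv 𝕜 f y (t • v)‖
      ≤ ‖t‖⁻¹ * (2 * c * ‖t • v‖) := by gcongr
    _ = 2 * c * ‖v‖ := by rw [norm_smul]; field_simp [norm_ne_zero_iff.2 ht0]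
    _ < ε := by
      have : 2 * c * (‖v‖ + 1) = ε := by simp only [c]; field_simp
      nlinarith

section Holomorphic

variable {E G : Type*} [NormedAddCommGroup E] [NormedSpace ℂ E] [NormedAddCommGroup G]
  [NormedSpace ℂ G] [CompleteSpace G] {f : E → G} {U : Set E}

theorem TendstoLocallyUniformlyOn.lineDifferentiableOn {ι : Type*} {l : Filter ι} [l.NeBot]
    {F : ι → E → G} {B : Set E} (hFf : TendstoLocallyUniformlyOn F f l B)
    (hF : ∀ᶠ i in l, DifferentiableOn ℂ (F i) B) (hB : IsOpen B) : LineDifferentiableOn ℂ f B := by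
  intro x hx v
  have hD : IsOpen {z : ℂ | x + z • v ∈ B} := hB.preimage (by fun_prop)
  have hlim : DifferentiableOn ℂ (fun z : ℂ => f (x + z • v)) {z : ℂ | x + z • v ∈ B} :=
    (hFf.comp (fun z : ℂ => x + z • v) (fun z hz => hz) (by fun_prop)).differentiableOn
      (hF.mono fun i hi => hi.comp (by fun_prop) fun z hz => hz) hD
  exact hlim.differentiableAt (hD.mem_nhds (by simpa using hx))

theorem DifferentiableOn.continuousOn_fderiv_of_isOpen [FiniteDimensional ℂ E]
    (hf : DifferentiableOn ℂ f U) (hU : IsOpen U) : ContinuousOn (fderiv ℂ f) U := by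
  refine continuousOn_clm_apply.2 fun v x₀ hx₀ => ?_
  obtain ⟨ε, hε, hεU⟩ := Metric.isOpen_iff.1 hU x₀ hx₀
  set r := ε / (2 * (‖v‖ + 1))
  have hr : 0 < r := by positivity
  have hmem : ∀ x ∈ closedBall x₀ (ε / 2), ∀ ζ ∈ closedBall (0 : ℂ) r, x + ζ • v ∈ U := by
    intro x hx ζ hζ
    have hζv : ‖ζ • v‖ < ε / 2 := by
      rw [norm_smul]
      calc ‖ζ‖ * ‖v‖ ≤ r * ‖v‖ := by gcongr; simpa using hζ
        _ < r * (‖v‖ + 1) := by gcongr; linarith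
        _ = ε / 2 := by simp only [r]; field_simp
    refine hεU (mem_ball_iff_norm.2 ?_)
    rw [add_sub_right_comm]
    linarith [norm_add_le (x - x₀) (ζ • v), mem_closedBall_iff_norm.1 hx]
  set Ψ : E → ℂ → G := fun x ζ => f (x + ζ • v)
  have hK : closedBall x₀ (ε / 2) ∈ 𝓝 x₀ := closedBall_mem_nhds x₀ (half_pos hε)
  have hunif : TendstoUniformlyOn Ψ (Ψ x₀) (𝓝 x₀) (closedBall 0 r) := by
    have hcont : ContinuousOn ↿Ψ (closedBall x₀ (ε / 2) ×ˢ closedBall (0 : ℂ) r) :=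
      hf.continuousOn.comp (by fun_prop) fun p hp => hmem p.1 hp.1 p.2 hp.2
    have hcpt := (isCompact_closedBall x₀ (ε / 2)).prod (isCompact_closedBall (0 : ℂ) r)
    simpa [nhdsWithin_eq_nhds.2 hK] using
      (hcpt.uniformContinuousOn_of_continuous hcont).tendstoUniformlyOn (mem_of_mem_nhds hK)
  have hdiff : ∀ x ∈ closedBall x₀ (ε / 2), DifferentiableOn ℂ (Ψ x) (ball 0 r) :=
    fun x hx ζ hζ => ((hf.differentiableAt (hU.mem_nhds
      (hmem x hx ζ (ball_subset_closedBall hζ)))).comp ζ (by fun_prop)).differentiableWithinAt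
  have hderiv := ((hunif.mono ball_subset_closedBall).tendstoLocallyUniformlyOn.deriv
    (eventually_of_mem hK hdiff) isOpen_ball).tendsto_at (mem_ball_self hr)
  have hlineDeriv : ∀ x ∈ closedBall x₀ (ε / 2), _root_.deriv (Ψ x) 0 = fderiv ℂ f x v :=
    fun x hx => (hf.differentiableAt (hU.mem_nhds (by
      simpa using hmem x hx 0 (mem_closedBall_self hr.le)))).lineDeriv_eq_fderiv
  rw [ContinuousWithinAt, ← hlineDeriv x₀ (mem_of_mem_nhds hK)]
  exact (hderiv.congr' (eventually_of_mem hK hlineDeriv)).mono_left nhdsWithin_le_nhds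

theorem DifferentiableOn.lineDifferentiableOn_fderiv_apply [FiniteDimensional ℂ E]
    (hf : DifferentiableOn ℂ f U) (hU : IsOpen U) (v : E) :
    LineDifferentiableOn ℂ (fun x => fderiv ℂ f x v) U := by
  intro x₀ hx₀
  obtain ⟨ε, hε, hεU⟩ := Metric.isOpen_iff.1 hU x₀ hx₀
  have hB : ball x₀ (ε / 2) ⊆ U := (ball_subset_ball (half_le_self hε.le)).trans hεU
  have hslope := tendstoLocallyUniformlyOn_slope_fderiv hU hf
    (hf.continuousOn_fderiv_of_isOpen hU) v
  refine (hslope.mono hB |>.lineDifferentiableOn ?_ isOpen_ball) x₀ (mem_ball_self (half_pos hε))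
  filter_upwards [eventually_nhdsWithin_of_eventually_nhds
    (eventually_norm_smul_lt v (half_pos hε))] with t ht y hy
  have hyt : y + t • v ∈ U := by
    refine hεU (mem_ball_iff_norm.2 ?_)
    rw [add_sub_right_comm]
    linarith [norm_add_le (y - x₀) (t • v), mem_ball_iff_norm.1 hy]
  exact ((((hf.differentiableAt (hU.mem_nhds hyt)).comp y (by fun_prop)).sub
    (hf.differentiableAt (hU.mem_nhds (hB hy)))).const_smul t⁻¹).differentiableWithinAt

theorem DifferentiableOn.lineDifferentiableOn_det_fderiv_comp [FiniteDimensional ℂ E] {n : ℕ}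
    {φ : E → Fin n → ℂ} (hφ : DifferentiableOn ℂ φ U) (hU : IsOpen U)
    (V : (Fin n → ℂ) →ₗ[ℂ] E) :
    LineDifferentiableOn ℂ
      (fun x => LinearMap.det ((fderiv ℂ φ x : E →ₗ[ℂ] Fin n → ℂ) ∘ₗ V)) U := by
  simp_rw [← LinearMap.det_toMatrix']
  refine LineDifferentiableOn.matrix_det fun i j x hx v => ?_
  simp only [LinearMap.toMatrix'_apply, LinearMap.comp_apply, ContinuousLinearMap.coe_coe]
  exact differentiableAt_pi.1 (hφ.lineDifferentiableOn_fderiv_apply hU (V (Pi.single j 1)) x hx v) i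

theorem LineDifferentiableOn.eq_zero_on_line (hf : LineDifferentiableOn ℂ f U) (hU : IsOpen U)
    (hUc : Convex ℝ U) {p w : E} {z₀ z : ℂ} (hz₀ : p + z₀ • w ∈ U) (hz : p + z • w ∈ U)
    (h0 : ∃ᶠ ζ in 𝓝[≠] z₀, f (p + ζ • w) = 0) : f (p + z • w) = 0 := by
  have hopen : IsOpen {ζ : ℂ | p + ζ • w ∈ U} :=
    hU.preimage (continuous_const.add (continuous_id.smul continuous_const))
  have han := (hf.differentiableOn_line p w).analyticOnNhd hopen
  exact han.eqOn_zero_of_preconnected_of_frequently_eq_zero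
    (hUc.setOf_add_smul_mem p w).isPreconnected hz₀ h0 hz

theorem LineDifferentiableOn.eqOn_zero_of_convex (hf : LineDifferentiableOn ℂ f U) (hU : IsOpen U)
    (hUc : Convex ℝ U) {x₀ : E} (hx₀ : x₀ ∈ U) (h0 : f =ᶠ[𝓝 x₀] 0) : EqOn f 0 U := by
  intro x hx
  have h1 : f (x₀ + (1 : ℂ) • (x - x₀)) = 0 := by
    refine hf.eq_zero_on_line hU hUc (z₀ := 0) (by simpa using hx₀) (by simpa using hx) ?_
    refine (Eventually.frequently ?_ : ∃ᶠ ζ in 𝓝[≠] (0 : ℂ), f (x₀ + ζ • (x - x₀)) = 0)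
    refine eventually_nhdsWithin_of_eventually_nhds ?_
    have hc : Tendsto (fun ζ : ℂ => x₀ + ζ • (x - x₀)) (𝓝 0) (𝓝 x₀) :=
      (show Continuous (fun ζ : ℂ => x₀ + ζ • (x - x₀)) by fun_prop).tendsto' 0 x₀ (by simp)
    exact hc.eventually h0
  simpa using h1

theorem LineDifferentiableOn.eqOn_zero_of_preconnected (hf : LineDifferentiableOn ℂ f U)
    (hU : IsOpen U) (hUc : IsPreconnected U) {x₀ : E} (hx₀ : x₀ ∈ U) (h0 : f =ᶠ[𝓝 x₀] 0) :
    EqOn f 0 U := by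
  set S := {x | f =ᶠ[𝓝 x] 0}
  have hUS : U ⊆ S := by
    refine hUc.subset_of_closure_inter_subset isOpen_setOfPred_eventually_nhds ⟨x₀, hx₀, h0⟩ ?_
    rintro x ⟨hxS, hxU⟩
    obtain ⟨R, hR, hRU⟩ := Metric.isOpen_iff.1 hU x hxU
    obtain ⟨y, hyS, hxy⟩ := Metric.mem_closure_iff.1 hxS (R / 2) (half_pos hR)
    have hyU : ball y (R / 2) ⊆ U := fun z hz => hRU (by
      rw [mem_ball] at hz ⊢; linarith [dist_triangle z y x, dist_comm x y])
    have hzero := (hf.mono hyU).eqOn_zero_of_convex isOpen_ball (convex_ball y _)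
      (mem_ball_self (half_pos hR)) hyS
    exact Filter.mem_of_superset (isOpen_ball.mem_nhds (mem_ball.2 hxy)) hzero
  exact fun x hx => (hUS hx).self_of_nhds

theorem dist_re_le_of_im_eq_zero {m : ℕ} {q : Fin m → ℂ} (hq : ∀ i, (q i).im = 0)
    (x : Fin m → ℂ) : dist (fun i => ((x i).re : ℂ)) q ≤ dist x q := by
  refine (dist_pi_le_iff dist_nonneg).2 fun i => ?_
  calc dist ((x i).re : ℂ) (q i) = |(x i - q i).re| := by
        rw [Complex.dist_eq, ← Complex.re_add_im (q i), hq i]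
        simp [← Complex.ofReal_sub, Complex.norm_real]
    _ ≤ ‖x i - q i‖ := Complex.abs_re_le_norm _
    _ ≤ dist x q := by rw [← dist_eq_norm]; exact dist_le_pi_dist x q i

theorem LineDifferentiableOn.eqOn_zero_of_forall_real {m : ℕ} {f : (Fin m → ℂ) → G}
    {q : Fin m → ℂ} {r : ℝ} (hf : LineDifferentiableOn ℂ f (ball q r)) (hq : ∀ i, (q i).im = 0)
    (h0 : ∀ x ∈ ball q r, (∀ i, (x i).im = 0) → f x = 0) : EqOn f 0 (ball q r) := by
  intro x hx
  set a : Fin m → ℂ := fun i => ((x i).re : ℂ)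
  set b : Fin m → ℂ := fun i => ((x i).im : ℂ)
  have hx_eq : a + Complex.I • b = x := by
    ext1 i; simp [a, b, mul_comm Complex.I, Complex.re_add_im]
  have ha : a ∈ ball q r := (dist_re_le_of_im_eq_zero hq x).trans_lt hx
  have hreal : ∀ᶠ s : ℝ in 𝓝 0, f (a + (s : ℂ) • b) = 0 := by
    have hc : Tendsto (fun s : ℝ => a + (s : ℂ) • b) (𝓝 0) (𝓝 a) :=
      (show Continuous (fun s : ℝ => a + (s : ℂ) • b) by fun_prop).tendsto' 0 a (by simp)
    filter_upwards [hc.eventually (isOpen_ball.mem_nhds ha)] with s hs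
    exact h0 _ hs fun i => by simp [a, b]
  have hofReal : Tendsto ((↑) : ℝ → ℂ) (𝓝[≠] 0) (𝓝[≠] 0) := by
    simpa using Complex.continuous_ofReal.continuousWithinAt.tendsto_nhdsWithin
      (x := (0 : ℝ)) (s := {0}ᶜ) (t := {0}ᶜ) (fun s hs => by simpa using hs)
  rw [← hx_eq]
  exact hf.eq_zero_on_line isOpen_ball (convex_ball q r) (z₀ := 0) (by simpa using ha)
    (by rwa [hx_eq]) (hofReal.frequently (hreal.filter_mono nhdsWithin_le_nhds).frequently)

theorem LineDifferentiableOn.exists_real_ne_zero_near {m : ℕ} {f : (Fin m → ℂ) → G}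
    {U : Set (Fin m → ℂ)} (hf : LineDifferentiableOn ℂ f U) (hU : IsOpen U)
    (hUc : IsPreconnected U) {q₀ : Fin m → ℂ} (hq₀ : q₀ ∈ U) (hfq₀ : f q₀ ≠ 0)
    {q : Fin m → ℂ} (hq : q ∈ U) (hqre : ∀ i, (q i).im = 0) {ε : ℝ} (hε : 0 < ε) :
    ∃ x ∈ U ∩ ball q ε, (∀ i, (x i).im = 0) ∧ f x ≠ 0 := by
  by_contra! hcon
  obtain ⟨δ, hδ, hδU⟩ := Metric.isOpen_iff.1 hU q hq
  have hball : ball q (min δ ε) ⊆ U := (ball_subset_ball (min_le_left _ _)).trans hδU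
  have hzero : EqOn f 0 (ball q (min δ ε)) :=
    (hf.mono hball).eqOn_zero_of_forall_real hqre fun x hx hxre =>
      hcon x ⟨hball hx, ball_subset_ball (min_le_right _ _) hx⟩ hxre
  exact hfq₀ (hf.eqOn_zero_of_preconnected hU hUc hq
    (Filter.mem_of_superset (ball_mem_nhds q (lt_min hδ hε)) hzero) hq₀)

end Holomorphic

theorem LinearMap.finrank_range_lt_iff_range_ne_top {K M : Type*} [Field K] [AddCommGroup M]
    [Module K M] {n : ℕ} (L : M →ₗ[K] Fin n → K) :
    Module.finrank K (range L) < n ↔ range L ≠ ⊤ :=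
  ⟨fun h hL => h.ne (by rw [hL, finrank_top, Module.finrank_fin_fun]),
    fun h => (Submodule.finrank_lt h).trans_eq (Module.finrank_fin_fun K)⟩

theorem LinearMap.range_eq_top_of_det_comp_ne_zero {K M N : Type*} [Field K] [AddCommGroup M]
    [Module K M] [AddCommGroup N] [Module K N] [FiniteDimensional K N] (L : M →ₗ[K] N)
    (V : N →ₗ[K] M) (h : LinearMap.det (L ∘ₗ V) ≠ 0) : range L = ⊤ := by
  have hunit : IsUnit (L ∘ₗ V) := (LinearMap.isUnit_iff_isUnit_det _).2 (isUnit_iff_ne_zero.2 h)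
  exact top_le_iff.1 <| (range_eq_top.2 ((Module.End.isUnit_iff _).1 hunit).2).ge.trans
    (range_comp_le_range V L)

/-- Let `φ` be a holomorphic map on a connected open set `U ⊆ ℂ^m` with values in `ℂ^n`,
whose degeneracy locus `Z = {q ∈ U : rank dφ_q < n}` is a proper subset of `U` (generic
rank `n`).  Let `Y_ℝ = U ∩ ℝ^m` be the (nonempty) real trace, a totally real submanifold
of real dimension `m` of which `U` is a complexification.  Then `Z ∩ Y_ℝ` is nowhere dense
in `Y_ℝ` (every point of `Y_ℝ` is approximated by points of `Y_ℝ` not in `Z`); in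
particular the restriction of `φ` to `Y_ℝ` has a point where its differential has
rank `n`. -/
theorem real_trace_of_degeneracy_locus_nowhere_dense (m n : ℕ)
    (U : Set (Fin m → ℂ)) (hU : IsOpen U) (hUconn : IsConnected U)
    (φ : (Fin m → ℂ) → (Fin n → ℂ)) (hφ : DifferentiableOn ℂ φ U)
    (Z : Set (Fin m → ℂ))
    (hZ : Z = {q ∈ U | Module.finrank ℂ (LinearMap.range (fderiv ℂ φ q : (Fin m → ℂ) →ₗ[ℂ] (Fin n → ℂ))) < n})
    (hZprop : Z ≠ U)
    (Yr : Set (Fin m → ℂ))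
    (hYr : Yr = {q ∈ U | ∀ i, (q i).im = 0})
    (hYne : Yr.Nonempty) :
    (∀ q ∈ Yr, ∀ ε : ℝ, 0 < ε → ∃ q' ∈ Yr, q' ∉ Z ∧ dist q q' < ε) ∧
    (∃ q ∈ Yr, Module.finrank ℂ (LinearMap.range (fderiv ℂ φ q : (Fin m → ℂ) →ₗ[ℂ] (Fin n → ℂ))) = n) := by
  set D : (Fin m → ℂ) → (Fin m → ℂ) →ₗ[ℂ] (Fin n → ℂ) := fun q => fderiv ℂ φ q
  have hnotZ : ∀ q ∈ U, q ∉ Z ↔ LinearMap.range (D q) = ⊤ := fun q hq => by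
    simp only [hZ, mem_sep_iff, hq, true_and, LinearMap.finrank_range_lt_iff_range_ne_top, not_not,
      D]
  obtain ⟨q₀, hq₀U, hq₀Z⟩ : (U \ Z).Nonempty :=
    sdiff_nonempty.2 fun hUZ => hZprop (hUZ.antisymm' (hZ ▸ sep_subset _ _))
  obtain ⟨V, hV⟩ := (D q₀).exists_rightInverse_of_surjective ((hnotZ q₀ hq₀U).1 hq₀Z)
  set F : (Fin m → ℂ) → ℂ := fun x => LinearMap.det (D x ∘ₗ V)
  have hF : LineDifferentiableOn ℂ F U := hφ.lineDifferentiableOn_det_fderiv_comp hU V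
  have hdense : ∀ q ∈ Yr, ∀ ε : ℝ, 0 < ε → ∃ q' ∈ Yr, q' ∉ Z ∧ dist q q' < ε := by
    intro q hq ε hε
    rw [hYr] at hq
    obtain ⟨x, ⟨hxU, hxq⟩, hxre, hFx⟩ := hF.exists_real_ne_zero_near hU hUconn.isPreconnected
      hq₀U (by simp [F, hV]) hq.1 hq.2 hε
    exact ⟨x, hYr ▸ ⟨hxU, hxre⟩,
      (hnotZ x hxU).2 ((D x).range_eq_top_of_det_comp_ne_zero V hFx), by rwa [dist_comm]⟩
  refine ⟨hdense, ?_⟩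
  obtain ⟨q, hq⟩ := hYne
  obtain ⟨q', hq'Y, hq'Z, -⟩ := hdense q hq 1 one_pos
  have hq'U : q' ∈ U := (hYr ▸ hq'Y).1
  refine ⟨q', hq'Y, ?_⟩
  rw [(hnotZ q' hq'U).1 hq'Z, finrank_top, Module.finrank_fin_fun]
end
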